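/- arXiv:2210.02146 — 10 statements merged into one kernel-verified Lean document; each statement's English description precedes it below -/
import Mathlib

section
/- The following are equivalent for a pointed category C with binary products: (i) for every morphism f : X × X → Y and all morphisms x, x' : S → X and y : S → X, if f ∘ ⟨x,0⟩ = f ∘ ⟨x',0⟩ then f ∘ ⟨x,y⟩ = f ∘ ⟨x',y⟩; (ii) for every morphism f : X × Y → Z and all morphisms x, x' : S → X and y : S → Y, if f ∘ ⟨x,0⟩ = f ∘ ⟨x',0⟩ then f ∘ ⟨x,y⟩ = f ∘ ⟨x',y⟩; (iii) for every morphism f : X × Y → Z and all morphisms x, x' : S → X and y, y' : S → Y, if f ∘ ⟨x,0⟩ = f ∘ ⟨x',0⟩ and f ∘ ⟨0,y⟩ = f ∘ ⟨0,y'⟩ then f ∘ ⟨x,y⟩ = f ∘ ⟨x',y'⟩. -/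
/-!
(iii) ⇒ (i) is the case `y = y'`. For (ii) ⇒ (iii), (ii) applied to `f` and to `f` precomposed
with the braiding changes `x` and `y` one at a time. For (i) ⇒ (ii), apply (i) on the object
`X ⨯ Y` to `(π₁ × π₂) ≫ f`, which sends `⟨a, b⟩` to `⟨a ≫ π₁, b ≫ π₂⟩ ≫ f`, with the elements
`⟨x, 0⟩`, `⟨x', 0⟩` and `⟨0, y⟩`.
-/

open CategoryTheory CategoryTheory.Limits

universe v u

/-- A pointed category with binary products is *centralic* if for every
`f : X ⨯ Y ⟶ Z` and generalized elements `x x' : S ⟶ X`, `y : S ⟶ Y`,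
`f ∘ ⟨x,0⟩ = f ∘ ⟨x',0⟩` implies `f ∘ ⟨x,y⟩ = f ∘ ⟨x',y⟩`. -/
def Centralic (C : Type u) [Category.{v} C] [HasZeroObject C] [HasZeroMorphisms C]
    [HasBinaryProducts C] : Prop :=
  ∀ ⦃X Y Z S : C⦄ (f : X ⨯ Y ⟶ Z) (x x' : S ⟶ X) (y : S ⟶ Y),
    prod.lift x 0 ≫ f = prod.lift x' 0 ≫ f →
    prod.lift x y ≫ f = prod.lift x' y ≫ f

namespace Centralic

variable {C : Type u} [Category.{v} C] [HasZeroObject C] [HasZeroMorphisms C]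
  [HasBinaryProducts C]

theorem of_forall_prod_self
    (h : ∀ ⦃X Y S : C⦄ (f : X ⨯ X ⟶ Y) (x x' y : S ⟶ X),
      prod.lift x 0 ≫ f = prod.lift x' 0 ≫ f →
      prod.lift x y ≫ f = prod.lift x' y ≫ f) :
    Centralic C := by
  intro X Y Z S f x x' y hx
  have hg := h (prod.map prod.fst prod.snd ≫ f) (prod.lift x 0) (prod.lift x' 0) (prod.lift 0 y)
  simp only [prod.lift_map_assoc, prod.lift_fst, prod.lift_snd, zero_comp] at hg
  exact hg hx

theorem lift_comp_eq_right (hC : Centralic C) {X Y Z S : C} (f : X ⨯ Y ⟶ Z) (x : S ⟶ X)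
    {y y' : S ⟶ Y} (hy : prod.lift 0 y ≫ f = prod.lift 0 y' ≫ f) :
    prod.lift x y ≫ f = prod.lift x y' ≫ f := by
  have hswap : ∀ (a : S ⟶ Y) (b : S ⟶ X),
      prod.lift a b ≫ (prod.braiding Y X).hom ≫ f = prod.lift b a ≫ f := by
    intro a b
    simp only [prod.braiding_hom, prod.comp_lift_assoc, prod.lift_fst, prod.lift_snd]
  simpa only [hswap] using hC ((prod.braiding Y X).hom ≫ f) y y' x (by simpa only [hswap])

theorem lift_comp_eq (hC : Centralic C) {X Y Z S : C} (f : X ⨯ Y ⟶ Z) {x x' : S ⟶ X}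
    {y y' : S ⟶ Y} (hx : prod.lift x 0 ≫ f = prod.lift x' 0 ≫ f)
    (hy : prod.lift 0 y ≫ f = prod.lift 0 y' ≫ f) :
    prod.lift x y ≫ f = prod.lift x' y' ≫ f :=
  (hC f x x' y hx).trans (hC.lift_comp_eq_right f x' hy)

end Centralic

theorem stmt0 (C : Type u) [Category.{v} C] [HasZeroObject C] [HasZeroMorphisms C]
    [HasBinaryProducts C] :
    List.TFAE
      [ -- (i)
        (∀ ⦃X Y S : C⦄ (f : X ⨯ X ⟶ Y) (x x' y : S ⟶ X),
          prod.lift x 0 ≫ f = prod.lift x' 0 ≫ f →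
          prod.lift x y ≫ f = prod.lift x' y ≫ f),
        -- (ii)
        Centralic C,
        -- (iii)
        (∀ ⦃X Y Z S : C⦄ (f : X ⨯ Y ⟶ Z) (x x' : S ⟶ X) (y y' : S ⟶ Y),
          prod.lift x 0 ≫ f = prod.lift x' 0 ≫ f →
          prod.lift 0 y ≫ f = prod.lift 0 y' ≫ f →
          prod.lift x y ≫ f = prod.lift x' y' ≫ f) ] := by
  tfae_have 1 → 2 := Centralic.of_forall_prod_self
  tfae_have 2 → 3 := fun hC _ _ _ _ f _ _ _ _ hx hy => hC.lift_comp_eq f hx hy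
  tfae_have 3 → 1 := fun h _ _ _ f x x' y hx => h f x x' y y hx rfl
  tfae_finish
end

section
/- Let C be a pointed finitely complete category with coequalizers. The following are equivalent: (1) binary products commute with coequalizers in C, i.e., for any two coequalizer diagrams u₁, v₁ : C₁ ⇉ X₁ → Q₁ (with coequalizer map q₁) and u₂, v₂ : C₂ ⇉ X₂ → Q₂ (with coequalizer map q₂), the diagram u₁ × u₂, v₁ × v₂ : C₁ × C₂ ⇉ X₁ × X₂ together with q₁ × q₂ : X₁ × X₂ → Q₁ × Q₂ is a coequalizer diagram; (2) for any regular epimorphism q : X → Y and any object Z, the commutative square with sides ⟨1_X,0⟩ : X → X × Z, q : X → Y, q × 1_Z : X × Z → Y × Z and ⟨1_Y,0⟩ : Y → Y × Z is a pushout; (3) regular epimorphisms are stable under binary products in C (q₁ × q₂ is a regular epimorphism whenever q₁ and q₂ are) and C is centralic. -/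
open CategoryTheory CategoryTheory.Limits

universe v u

/-- `q : X ⟶ Q` is a coequalizer of `u v : A ⟶ X`. -/
def IsCoequalizerDiagram {C : Type u} [Category.{v} C] {A X Q : C}
    (u v : A ⟶ X) (q : X ⟶ Q) : Prop :=
  u ≫ q = v ≫ q ∧ ∀ ⦃Z : C⦄ (h : X ⟶ Z), u ≫ h = v ≫ h → ∃! t : Q ⟶ Z, q ≫ t = h

/-- A morphism is a regular epimorphism if it is the coequalizer of some pair. -/
def IsRegularEpimorphism {C : Type u} [Category.{v} C] {X Q : C} (q : X ⟶ Q) : Prop :=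
  ∃ (A : C) (u v : A ⟶ X), IsCoequalizerDiagram u v q

/-- Binary products commute with coequalizers. -/
def ProdCommutesWithCoeq (C : Type u) [Category.{v} C] [HasBinaryProducts C] : Prop :=
  ∀ ⦃C₁ X₁ Q₁ C₂ X₂ Q₂ : C⦄ (u₁ v₁ : C₁ ⟶ X₁) (q₁ : X₁ ⟶ Q₁)
    (u₂ v₂ : C₂ ⟶ X₂) (q₂ : X₂ ⟶ Q₂),
    IsCoequalizerDiagram u₁ v₁ q₁ → IsCoequalizerDiagram u₂ v₂ q₂ →
    IsCoequalizerDiagram (prod.map u₁ u₂) (prod.map v₁ v₂) (prod.map q₁ q₂)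

/-- Regular epimorphisms are stable under binary products. -/
def RegularEpisStableUnderProducts (C : Type u) [Category.{v} C] [HasBinaryProducts C] : Prop :=
  ∀ ⦃X₁ Q₁ X₂ Q₂ : C⦄ (q₁ : X₁ ⟶ Q₁) (q₂ : X₂ ⟶ Q₂),
    IsRegularEpimorphism q₁ → IsRegularEpimorphism q₂ →
    IsRegularEpimorphism (prod.map q₁ q₂)

section Aux

open ZeroObject

variable {C : Type u} [Category.{v} C]

lemma IsCoequalizerDiagram.epi' {A X Q : C} {u v : A ⟶ X} {q : X ⟶ Q}
    (h : IsCoequalizerDiagram u v q) : Epi q := by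
  constructor
  intro W a b hab
  obtain ⟨t, _, hu⟩ := h.2 (q ≫ a) (by rw [← Category.assoc, h.1, Category.assoc])
  rw [hu a rfl, hu b hab.symm]

lemma id_isCoequalizerDiagram (Z : C) : IsCoequalizerDiagram (𝟙 Z) (𝟙 Z) (𝟙 Z) :=
  ⟨rfl, fun _ h _ => ⟨h, Category.id_comp h, fun t ht => by simpa using ht⟩⟩

lemma zero_pair_isCoequalizerDiagram [HasZeroObject C] [HasZeroMorphisms C] (Y : C) :
    IsCoequalizerDiagram (0 : (0 : C) ⟶ Y) 0 (𝟙 Y) :=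
  ⟨rfl, fun _ h _ => ⟨h, Category.id_comp h, fun t ht => by simpa using ht⟩⟩

lemma coequalizer_isCoequalizerDiagram [HasCoequalizers C] {A X : C} (u v : A ⟶ X) :
    IsCoequalizerDiagram u v (coequalizer.π u v) :=
  ⟨coequalizer.condition u v, fun _ h w =>
    ⟨coequalizer.desc h w, coequalizer.π_desc _ _, fun t ht =>
      coequalizer.hom_ext (by rw [ht, coequalizer.π_desc])⟩⟩

/-- Build `IsPushout` from the bare universal property. -/
lemma isPushout_of_universal {Z X Y P : C} {f : Z ⟶ X} {g : Z ⟶ Y}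
    {inl : X ⟶ P} {inr : Y ⟶ P} (w : f ≫ inl = g ≫ inr)
    (H : ∀ ⦃W : C⦄ (h : X ⟶ W) (k : Y ⟶ W), f ≫ h = g ≫ k →
      ∃! t : P ⟶ W, inl ≫ t = h ∧ inr ≫ t = k) :
    IsPushout f g inl inr := by
  refine IsPushout.of_isColimit' ⟨w⟩ (PushoutCocone.IsColimit.mk w
    (fun s => (H s.inl s.inr s.condition).choose)
    (fun s => (H s.inl s.inr s.condition).choose_spec.1.1)
    (fun s => (H s.inl s.inr s.condition).choose_spec.1.2)
    (fun s m h1 h2 => (H s.inl s.inr s.condition).choose_spec.2 m ⟨h1, h2⟩))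

lemma epi_map_id_of_pushout [HasZeroObject C] [HasZeroMorphisms C] [HasBinaryProducts C]
    {X Y Z : C} {q : X ⟶ Y}
    (hP : IsPushout (prod.lift (𝟙 X) (0 : X ⟶ Z)) q
      (prod.map q (𝟙 Z)) (prod.lift (𝟙 Y) (0 : Y ⟶ Z)))
    (hq : Epi q) : Epi (prod.map q (𝟙 Z)) := by
  constructor
  intro W a b hab
  apply hP.hom_ext hab
  rw [← cancel_epi q]
  calc q ≫ prod.lift (𝟙 Y) 0 ≫ a = (prod.lift (𝟙 X) 0 ≫ prod.map q (𝟙 Z)) ≫ a := by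
        rw [← Category.assoc]; congr 1; apply Limits.prod.hom_ext <;> simp
    _ = (prod.lift (𝟙 X) 0 ≫ prod.map q (𝟙 Z)) ≫ b := by
        rw [Category.assoc, hab, Category.assoc]
    _ = q ≫ prod.lift (𝟙 Y) 0 ≫ b := by
        rw [← Category.assoc]; congr 1; apply Limits.prod.hom_ext <;> simp

end Aux

open ZeroObject

theorem stmt1 (C : Type u) [Category.{v} C] [HasZeroObject C] [HasZeroMorphisms C]
    [HasFiniteLimits C] [HasCoequalizers C] :
    List.TFAE
      [ -- (1)
        ProdCommutesWithCoeq C,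
        -- (2)
        (∀ ⦃X Y : C⦄ (q : X ⟶ Y) (Z : C), IsRegularEpimorphism q →
          IsPushout (prod.lift (𝟙 X) (0 : X ⟶ Z)) q
            (prod.map q (𝟙 Z)) (prod.lift (𝟙 Y) (0 : Y ⟶ Z))),
        -- (3)
        (RegularEpisStableUnderProducts C ∧ Centralic C) ] := by
  tfae_have 1 → 3 := by
    intro h1
    constructor
    · rintro X₁ Q₁ X₂ Q₂ q₁ q₂ ⟨A₁, u₁, v₁, hc₁⟩ ⟨A₂, u₂, v₂, hc₂⟩
      exact ⟨_, _, _, h1 u₁ v₁ q₁ u₂ v₂ q₂ hc₁ hc₂⟩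
    · intro X Y Z S f x x' y hxy
      have hq := coequalizer_isCoequalizerDiagram x x'
      have h := h1 x x' (coequalizer.π x x') (0 : (0 : C) ⟶ Y) 0 (𝟙 Y) hq
        (zero_pair_isCoequalizerDiagram Y)
      have e : ∀ w : S ⟶ X,
          prod.map w (0 : (0 : C) ⟶ Y) = prod.fst ≫ prod.lift w (0 : S ⟶ Y) := by
        intro w; apply Limits.prod.hom_ext <;> simp [prod.lift_fst, prod.lift_snd]
      have hfeq : prod.map x (0 : (0 : C) ⟶ Y) ≫ f = prod.map x' 0 ≫ f := by
        rw [e x, e x', Category.assoc, Category.assoc, hxy]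
      obtain ⟨t, ht, -⟩ := h.2 f hfeq
      have key : ∀ w : S ⟶ X,
          prod.lift w y ≫ f = prod.lift (w ≫ coequalizer.π x x') y ≫ t := by
        intro w
        rw [← ht, ← Category.assoc]
        congr 1
        apply Limits.prod.hom_ext <;> simp
      rw [key x, key x', hq.1]
  tfae_have 3 → 2 := by
    rintro ⟨hstab, hcent⟩ X Y q Z hq
    have hepi : Epi q := by obtain ⟨A, u, v, hc⟩ := hq; exact hc.epi'
    obtain ⟨B, a, b, hcz⟩ :=
      hstab q (𝟙 Z) hq ⟨Z, 𝟙 Z, 𝟙 Z, id_isCoequalizerDiagram Z⟩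
    apply isPushout_of_universal
    · apply Limits.prod.hom_ext <;> simp
    intro W g k hw
    have hfst : (a ≫ prod.fst) ≫ q = (b ≫ prod.fst) ≫ q := by
      have h1 := hcz.1
      calc (a ≫ prod.fst) ≫ q = a ≫ prod.map q (𝟙 Z) ≫ prod.fst := by simp
        _ = b ≫ prod.map q (𝟙 Z) ≫ prod.fst := by
            rw [← Category.assoc, ← Category.assoc, h1]
        _ = (b ≫ prod.fst) ≫ q := by simp
    have hsnd : a ≫ prod.snd = b ≫ prod.snd := by
      have h1 := hcz.1
      calc a ≫ prod.snd = a ≫ prod.map q (𝟙 Z) ≫ prod.snd := by simp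
        _ = b ≫ prod.map q (𝟙 Z) ≫ prod.snd := by
            rw [← Category.assoc, ← Category.assoc, h1]
        _ = b ≫ prod.snd := by simp
    have lift10 : ∀ {B' : C} (m : B' ⟶ X),
        prod.lift m (0 : B' ⟶ Z) = m ≫ prod.lift (𝟙 X) 0 := by
      intro B' m; apply Limits.prod.hom_ext <;> simp
    have h0 : prod.lift (a ≫ prod.fst) 0 ≫ g = prod.lift (b ≫ prod.fst) 0 ≫ g := by
      rw [lift10 (a ≫ prod.fst), lift10 (b ≫ prod.fst), Category.assoc, Category.assoc, hw, ← Category.assoc,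
        ← Category.assoc, hfst, Category.assoc, Category.assoc, ← hw]
      simp only [Category.assoc]
    have hab : a ≫ g = b ≫ g := by
      have hc := hcent g (a ≫ prod.fst) (b ≫ prod.fst) (a ≫ prod.snd) h0
      have ea : a = prod.lift (a ≫ prod.fst) (a ≫ prod.snd) := by
        apply Limits.prod.hom_ext <;> simp [prod.lift_fst, prod.lift_snd]
      have eb : b = prod.lift (b ≫ prod.fst) (a ≫ prod.snd) := by
        apply Limits.prod.hom_ext <;> simp [hsnd, prod.lift_fst, prod.lift_snd]
      rw [ea, eb, hc]
    obtain ⟨t, ht, htu⟩ := hcz.2 g hab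
    refine ⟨t, ⟨ht, ?_⟩, fun t' ht' => htu t' ht'.1⟩
    rw [← cancel_epi q]
    calc q ≫ prod.lift (𝟙 Y) 0 ≫ t = (prod.lift (𝟙 X) 0 ≫ prod.map q (𝟙 Z)) ≫ t := by
          rw [← Category.assoc]; congr 1; apply Limits.prod.hom_ext <;> simp
      _ = prod.lift (𝟙 X) 0 ≫ g := by rw [Category.assoc, ht]
      _ = q ≫ k := hw
  tfae_have 2 → 1 := by
    intro h2 C₁ X₁ Q₁ C₂ X₂ Q₂ u₁ v₁ q₁ u₂ v₂ q₂ hc₁ hc₂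
    constructor
    · rw [prod.map_map, prod.map_map, hc₁.1, hc₂.1]
    intro W h hw
    have P₁ := h2 q₁ X₂ ⟨_, _, _, hc₁⟩
    have P₂ := h2 q₂ Q₁ ⟨_, _, _, hc₂⟩
    -- k₁ : Q₁ ⟶ W
    have hk₁w : u₁ ≫ prod.lift (𝟙 X₁) (0 : X₁ ⟶ X₂) ≫ h
        = v₁ ≫ prod.lift (𝟙 X₁) (0 : X₁ ⟶ X₂) ≫ h := by
      have e : ∀ (w₁ : C₁ ⟶ X₁) (w₂ : C₂ ⟶ X₂),
          w₁ ≫ prod.lift (𝟙 X₁) (0 : X₁ ⟶ X₂)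
            = prod.lift (𝟙 C₁) (0 : C₁ ⟶ C₂) ≫ prod.map w₁ w₂ := by
        intro w₁ w₂; apply Limits.prod.hom_ext <;> simp
      rw [← Category.assoc, ← Category.assoc, e u₁ u₂, e v₁ v₂, Category.assoc,
        Category.assoc, hw]
    obtain ⟨k₁, hk₁, -⟩ := hc₁.2 (prod.lift (𝟙 X₁) 0 ≫ h) hk₁w
    -- t₁ : Q₁ ⨯ X₂ ⟶ W
    set t₁ := P₁.desc h k₁ hk₁.symm with ht₁def
    have ht₁ : prod.map q₁ (𝟙 X₂) ≫ t₁ = h := P₁.inl_desc _ _ _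
    -- k₂ : Q₂ ⟶ W
    have hk₂w : u₂ ≫ prod.lift (0 : X₂ ⟶ Q₁) (𝟙 X₂) ≫ t₁
        = v₂ ≫ prod.lift (0 : X₂ ⟶ Q₁) (𝟙 X₂) ≫ t₁ := by
      have e : ∀ w₂ : C₂ ⟶ X₂,
          w₂ ≫ prod.lift (0 : X₂ ⟶ Q₁) (𝟙 X₂)
            = prod.lift (0 : C₂ ⟶ X₁) w₂ ≫ prod.map q₁ (𝟙 X₂) := by
        intro w₂; apply Limits.prod.hom_ext <;> simp
      have e' : ∀ (w₁ : C₁ ⟶ X₁) (w₂ : C₂ ⟶ X₂),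
          prod.lift (0 : C₂ ⟶ X₁) w₂
            = prod.lift (0 : C₂ ⟶ C₁) (𝟙 C₂) ≫ prod.map w₁ w₂ := by
        intro w₁ w₂; apply Limits.prod.hom_ext <;> simp
      rw [← Category.assoc, ← Category.assoc, e u₂, e v₂, Category.assoc, Category.assoc,
        ht₁, e' u₁ u₂, e' v₁ v₂, Category.assoc, Category.assoc, hw]
    obtain ⟨k₂, hk₂, -⟩ := hc₂.2 (prod.lift (0 : X₂ ⟶ Q₁) (𝟙 X₂) ≫ t₁) hk₂w
    -- s : Q₂ ⨯ Q₁ ⟶ W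
    have hw₂ : prod.lift (𝟙 X₂) (0 : X₂ ⟶ Q₁) ≫ prod.lift prod.snd prod.fst ≫ t₁
        = q₂ ≫ k₂ := by
      rw [← Category.assoc]
      have e : prod.lift (𝟙 X₂) (0 : X₂ ⟶ Q₁) ≫ prod.lift prod.snd prod.fst
          = prod.lift (0 : X₂ ⟶ Q₁) (𝟙 X₂) := by
        apply Limits.prod.hom_ext <;> simp [prod.lift_fst, prod.lift_snd]
      rw [e, hk₂]
    set s := P₂.desc (prod.lift prod.snd prod.fst ≫ t₁) k₂ hw₂ with hsdef
    have hs : prod.map q₂ (𝟙 Q₁) ≫ s = prod.lift prod.snd prod.fst ≫ t₁ :=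
      P₂.inl_desc _ _ _
    set t := (prod.lift prod.snd prod.fst : Q₁ ⨯ Q₂ ⟶ Q₂ ⨯ Q₁) ≫ s with htdef
    -- factorization
    have hfac : prod.map q₁ q₂ ≫ t = h := by
      have e1 : prod.map q₁ q₂ ≫ (prod.lift prod.snd prod.fst : Q₁ ⨯ Q₂ ⟶ Q₂ ⨯ Q₁)
          = prod.map q₁ (𝟙 X₂) ≫ prod.lift prod.snd prod.fst ≫ prod.map q₂ (𝟙 Q₁) := by
        apply Limits.prod.hom_ext <;> simp
      have e2 : (prod.lift prod.snd prod.fst : Q₁ ⨯ X₂ ⟶ X₂ ⨯ Q₁) ≫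
          prod.lift prod.snd prod.fst = 𝟙 _ := by
        apply Limits.prod.hom_ext <;> simp [prod.lift_fst, prod.lift_snd]
      calc prod.map q₁ q₂ ≫ t
          = (prod.map q₁ q₂ ≫ prod.lift prod.snd prod.fst) ≫ s := by
            rw [htdef, Category.assoc]
        _ = prod.map q₁ (𝟙 X₂) ≫ prod.lift prod.snd prod.fst ≫ prod.map q₂ (𝟙 Q₁) ≫ s := by
            rw [e1]; simp only [Category.assoc]
        _ = prod.map q₁ (𝟙 X₂) ≫ prod.lift prod.snd prod.fst ≫
              prod.lift prod.snd prod.fst ≫ t₁ := by rw [hs]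
        _ = prod.map q₁ (𝟙 X₂) ≫ t₁ := by
            rw [← Category.assoc (prod.lift prod.snd prod.fst), e2, Category.id_comp]
        _ = h := ht₁
    -- epiness of the product map
    have hepi₁ : Epi q₁ := hc₁.epi'
    have hepi₂ : Epi q₂ := hc₂.epi'
    have eQ₁ : Epi (prod.map q₁ (𝟙 X₂)) := epi_map_id_of_pushout P₁ hepi₁
    have eQ₂ : Epi (prod.map q₂ (𝟙 Q₁)) := epi_map_id_of_pushout P₂ hepi₂
    have hiso : ∀ (A B : C), IsIso (prod.lift prod.snd prod.fst : A ⨯ B ⟶ B ⨯ A) := by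
      intro A B
      exact ⟨prod.lift prod.snd prod.fst, by apply Limits.prod.hom_ext <;> simp [prod.lift_fst, prod.lift_snd],
        by apply Limits.prod.hom_ext <;> simp [prod.lift_fst, prod.lift_snd]⟩
    have emap : Epi (prod.map q₁ q₂) := by
      have efac : prod.map q₁ q₂
          = prod.map q₁ (𝟙 X₂) ≫ (prod.lift prod.snd prod.fst : Q₁ ⨯ X₂ ⟶ X₂ ⨯ Q₁)
            ≫ prod.map q₂ (𝟙 Q₁) ≫ (prod.lift prod.snd prod.fst : Q₂ ⨯ Q₁ ⟶ Q₁ ⨯ Q₂) := by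
        apply Limits.prod.hom_ext <;> simp [prod.lift_fst, prod.lift_snd, prod.lift_fst_assoc, prod.lift_snd_assoc]
      rw [efac]
      have := hiso Q₁ X₂
      have := hiso Q₂ Q₁
      infer_instance
    exact ⟨t, hfac, fun t' ht' => by
      rw [← cancel_epi (prod.map q₁ q₂), ht', hfac]⟩
  tfae_finish
end

section
/- Every pointed category C admitting binary products and coequalizers, in which binary products commute with coequalizers, is centralic. -/
open CategoryTheory CategoryTheory.Limits

universe v u

section

variable {C : Type u} [Category.{v} C]

theorem isCoequalizerDiagram_coequalizer_π {A X : C} (u v : A ⟶ X) [HasCoequalizer u v] :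
    IsCoequalizerDiagram u v (coequalizer.π u v) :=
  ⟨coequalizer.condition u v, fun _ h hh =>
    ⟨coequalizer.desc h hh, coequalizer.π_desc h hh,
      fun _ ht => coequalizer.hom_ext (by rw [ht, coequalizer.π_desc])⟩⟩

theorem isCoequalizerDiagram_id {A X : C} (u : A ⟶ X) : IsCoequalizerDiagram u u (𝟙 X) :=
  ⟨rfl, fun _ h _ => ⟨h, Category.id_comp h, fun _ ht => (Category.id_comp _).symm.trans ht⟩⟩

theorem prod.map_zero_eq_fst_comp_lift [HasZeroMorphisms C] [HasBinaryProducts C]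
    {S X Y Y' : C} (x : S ⟶ X) : prod.map x (0 : Y ⟶ Y') = prod.fst ≫ prod.lift x 0 := by
  ext <;> simp only [prod.map_fst, prod.map_snd, Category.assoc, prod.lift_fst, prod.lift_snd,
    comp_zero]

end

theorem stmt2 (C : Type u) [Category.{v} C] [HasZeroObject C] [HasZeroMorphisms C]
    [HasBinaryProducts C] [HasCoequalizers C]
    (h : ProdCommutesWithCoeq C) : Centralic C := by
  intro X Y Z S f x x' y hf
  have hq := isCoequalizerDiagram_coequalizer_π x x'
  -- `f` coequalizes `x × 0` and `x' × 0`, so it factors through the coequalizer `q × 𝟙`,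
  -- and `q` identifies `x` with `x'`.
  have hf₀ : prod.map x (0 : Y ⟶ Y) ≫ f = prod.map x' 0 ≫ f := by
    rw [prod.map_zero_eq_fst_comp_lift, prod.map_zero_eq_fst_comp_lift, Category.assoc,
      Category.assoc, hf]
  obtain ⟨t, rfl, -⟩ := (h x x' _ 0 0 (𝟙 Y) hq (isCoequalizerDiagram_id 0)).2 f hf₀
  rw [prod.lift_map_assoc, prod.lift_map_assoc, hq.1]
end

section
/- Let C be a centralic category. If morphisms f : X → Y and g : X' → Y admit a cooperator ρ : X × X' → Y, then the kernel equivalence relation of f × g is contained in that of ρ; explicitly, for all morphisms x, x' : S → X and y, y' : S → X', if f ∘ x = f ∘ x' and g ∘ y = g ∘ y', then ρ ∘ ⟨x,y⟩ = ρ ∘ ⟨x',y'⟩. -/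
/-!
Move from `⟨x, y⟩` to `⟨x', y'⟩` one coordinate at a time. The cooperator equations turn
`f ∘ x = f ∘ x'` into `ρ ∘ ⟨x, 0⟩ = ρ ∘ ⟨x', 0⟩`, and centrality then replaces `0` by `y`;
the second coordinate is handled the same way after precomposing `ρ` with the swap of factors.
-/

open CategoryTheory CategoryTheory.Limits

universe v u

/-- `ρ : A ⨯ B ⟶ X` is a cooperator for `f : A ⟶ X` and `g : B ⟶ X`. -/
def IsCooperator {C : Type u} [Category.{v} C] [HasZeroObject C] [HasZeroMorphisms C]
    [HasBinaryProducts C] {A B X : C} (f : A ⟶ X) (g : B ⟶ X) (ρ : A ⨯ B ⟶ X) : Prop :=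
  prod.lift (𝟙 A) 0 ≫ ρ = f ∧ prod.lift 0 (𝟙 B) ≫ ρ = g

/-- Two morphisms with common codomain commute if they admit a cooperator. -/
def Commutes {C : Type u} [Category.{v} C] [HasZeroObject C] [HasZeroMorphisms C]
    [HasBinaryProducts C] {A B X : C} (f : A ⟶ X) (g : B ⟶ X) : Prop :=
  ∃ ρ : A ⨯ B ⟶ X, IsCooperator f g ρ

/-- A morphism `f : A ⟶ B` is central if it commutes with `𝟙 B`. -/
def Central {C : Type u} [Category.{v} C] [HasZeroObject C] [HasZeroMorphisms C]
    [HasBinaryProducts C] {A B : C} (f : A ⟶ B) : Prop :=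
  Commutes f (𝟙 B)

section

variable {C : Type u} [Category.{v} C] [HasZeroObject C] [HasZeroMorphisms C]
  [HasBinaryProducts C]

namespace IsCooperator

variable {A B X S : C} {f : A ⟶ X} {g : B ⟶ X} {ρ : A ⨯ B ⟶ X}

theorem lift_zero_comp (hρ : IsCooperator f g ρ) (a : S ⟶ A) :
    prod.lift a 0 ≫ ρ = a ≫ f := by
  rw [← hρ.1, ← Category.assoc]
  congr 1
  ext <;> simp

theorem zero_lift_comp (hρ : IsCooperator f g ρ) (b : S ⟶ B) :
    prod.lift 0 b ≫ ρ = b ≫ g := by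
  rw [← hρ.2, ← Category.assoc]
  congr 1
  ext <;> simp

end IsCooperator

namespace Centralic

theorem lift_comp_eq_of_zero_lift_comp_eq (hC : Centralic C) {X Y Z S : C} (h : X ⨯ Y ⟶ Z)
    (x : S ⟶ X) {y y' : S ⟶ Y} (hy : prod.lift 0 y ≫ h = prod.lift 0 y' ≫ h) :
    prod.lift x y ≫ h = prod.lift x y' ≫ h := by
  have swap : ∀ (a : S ⟶ X) (b : S ⟶ Y),
      prod.lift b a ≫ prod.lift prod.snd prod.fst ≫ h = prod.lift a b ≫ h := by
    intro a b
    rw [← Category.assoc, prod.comp_lift, prod.lift_fst, prod.lift_snd]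
  simpa only [swap] using
    hC (prod.lift prod.snd prod.fst ≫ h) y y' x (by simpa only [swap] using hy)

end Centralic

end

theorem stmt3 (C : Type u) [Category.{v} C] [HasZeroObject C] [HasZeroMorphisms C]
    [HasBinaryProducts C] (hC : Centralic C)
    {X X' Y S : C} (f : X ⟶ Y) (g : X' ⟶ Y) (ρ : X ⨯ X' ⟶ Y)
    (hρ : IsCooperator f g ρ)
    (x x' : S ⟶ X) (y y' : S ⟶ X')
    (hf : x ≫ f = x' ≫ f) (hg : y ≫ g = y' ≫ g) :
    prod.lift x y ≫ ρ = prod.lift x' y' ≫ ρ :=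
  calc prod.lift x y ≫ ρ
      = prod.lift x' y ≫ ρ := hC ρ x x' y <| by
        rw [hρ.lift_zero_comp, hρ.lift_zero_comp, hf]
    _ = prod.lift x' y' ≫ ρ := hC.lift_comp_eq_of_zero_lift_comp_eq ρ x' <| by
        rw [hρ.zero_lift_comp, hρ.zero_lift_comp, hg]
end

section
/- Every weakly unital category is centralic: if C is a pointed category with binary products in which, for every two objects X and Y, the canonical product inclusions ⟨1_X,0⟩ : X → X × Y and ⟨0,1_Y⟩ : Y → X × Y are jointly epimorphic, then C is centralic. -/
open CategoryTheory CategoryTheory.Limits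

universe v u

/-- Every weakly unital category is centralic. -/
theorem stmt4 (C : Type u) [Category.{v} C] [HasZeroObject C] [HasZeroMorphisms C]
    [HasBinaryProducts C]
    (weaklyUnital : ∀ ⦃X Y Q : C⦄ (g h : X ⨯ Y ⟶ Q),
      prod.lift (𝟙 X) 0 ≫ g = prod.lift (𝟙 X) 0 ≫ h →
      prod.lift 0 (𝟙 Y) ≫ g = prod.lift 0 (𝟙 Y) ≫ h → g = h) :
    Centralic C := by
  intro X Y Z S f x x' y h0
  have key : prod.map x (𝟙 Y) ≫ f = prod.map x' (𝟙 Y) ≫ f := by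
    apply weaklyUnital
    · simpa [prod.lift_map_assoc] using h0
    · simp [prod.lift_map_assoc]
  calc prod.lift x y ≫ f = prod.lift (𝟙 S) y ≫ prod.map x (𝟙 Y) ≫ f := by
        simp [prod.lift_map_assoc]
    _ = prod.lift (𝟙 S) y ≫ prod.map x' (𝟙 Y) ≫ f := by rw [key]
    _ = prod.lift x' y ≫ f := by simp [prod.lift_map_assoc]
end

section
/- Let C be a centralic category. Given a central morphism f : X → Y with cooperator ρ_f : X × Y → Y for f and 1_Y, and any morphism g : X' → Y, there exists a unique cooperator ρ : X × X' → Y for f and g, and it is given by ρ = ρ_f ∘ (1_X × g). -/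
open CategoryTheory CategoryTheory.Limits

universe v u

lemma aux_lift_comm {C : Type u} [Category.{v} C] [HasZeroObject C] [HasZeroMorphisms C]
    [HasBinaryProducts C] {S A B X : C} (a : S ⟶ A) (ρ : A ⨯ B ⟶ X) :
    prod.lift a (0 : S ⟶ B) ≫ ρ = a ≫ prod.lift (𝟙 A) 0 ≫ ρ := by
  rw [← Category.assoc, prod.comp_lift, Category.comp_id, comp_zero]

lemma aux_lift_comm' {C : Type u} [Category.{v} C] [HasZeroObject C] [HasZeroMorphisms C]
    [HasBinaryProducts C] {S A B X : C} (b : S ⟶ B) (ρ : A ⨯ B ⟶ X) :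
    prod.lift (0 : S ⟶ A) b ≫ ρ = b ≫ prod.lift 0 (𝟙 B) ≫ ρ := by
  rw [← Category.assoc, prod.comp_lift, Category.comp_id, comp_zero]

/-- Uniqueness and explicit form of cooperators with a central morphism. -/
theorem stmt5 (C : Type u) [Category.{v} C] [HasZeroObject C] [HasZeroMorphisms C]
    [HasBinaryProducts C] (hC : Centralic C)
    {X X' Y : C} (f : X ⟶ Y) (g : X' ⟶ Y) (ρf : X ⨯ Y ⟶ Y)
    (hρf : IsCooperator f (𝟙 Y) ρf) :
    IsCooperator f g (prod.map (𝟙 X) g ≫ ρf) ∧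
      ∀ ρ : X ⨯ X' ⟶ Y, IsCooperator f g ρ → ρ = prod.map (𝟙 X) g ≫ ρf := by
  obtain ⟨hf1, hf2⟩ := hρf
  constructor
  · constructor
    · rw [← Category.assoc, prod.lift_map, zero_comp, Category.id_comp, hf1]
    · rw [← Category.assoc, prod.lift_map, Category.id_comp, zero_comp,
        aux_lift_comm' g ρf, hf2, Category.comp_id]
  · intro ρ ⟨h1, h2⟩
    have hz : ∀ {S : C} (b : S ⟶ Y), prod.lift 0 b ≫ ρf = b := fun b => by
      rw [aux_lift_comm' b ρf, hf2, Category.comp_id]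
    set Ξ : (X ⨯ X) ⨯ X' ⟶ Y :=
      prod.lift (prod.fst ≫ prod.fst)
        (prod.lift (prod.fst ≫ prod.snd) prod.snd ≫ ρ) ≫ ρf with hΞ
    have key := hC Ξ (prod.lift (0 : X ⨯ X' ⟶ X) prod.fst)
      (prod.lift prod.fst (0 : X ⨯ X' ⟶ X)) prod.snd ?_
    · have lhs : prod.lift (prod.lift (0 : X ⨯ X' ⟶ X) prod.fst) prod.snd ≫ Ξ = ρ := by
        rw [hΞ]
        simp only [prod.comp_lift_assoc, prod.lift_fst_assoc, prod.lift_snd_assoc,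
          prod.lift_fst, prod.lift_snd, prod.comp_lift, Category.assoc,
          prod.lift_fst_snd, Category.id_comp, zero_comp]
        exact hz ρ
      have rhs : prod.lift (prod.lift prod.fst (0 : X ⨯ X' ⟶ X)) prod.snd ≫ Ξ
          = prod.map (𝟙 X) g ≫ ρf := by
        rw [hΞ]
        simp only [prod.comp_lift_assoc, prod.lift_fst_assoc, prod.lift_snd_assoc,
          prod.lift_fst, prod.lift_snd, prod.comp_lift, Category.assoc, zero_comp]
        rw [aux_lift_comm' prod.snd ρ, h2, ← prod.lift_fst_comp_snd_comp, Category.comp_id]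
      rw [lhs, rhs] at key
      exact key
    · rw [hΞ]
      simp only [prod.comp_lift_assoc, prod.lift_fst_assoc, prod.lift_snd_assoc,
        prod.lift_fst, prod.lift_snd, prod.comp_lift, Category.assoc, zero_comp]
      rw [aux_lift_comm prod.fst ρ, h1]
      have e2 : prod.lift (0 : X ⨯ X' ⟶ X) (0 : X ⨯ X' ⟶ X') ≫ ρ = 0 := by
        rw [aux_lift_comm (0 : X ⨯ X' ⟶ X) ρ, zero_comp]
      rw [e2, hz (prod.fst ≫ f), aux_lift_comm prod.fst ρf, hf1]
end

section
/- Let C be a finitely complete centralic category in which regular epimorphisms are stable under binary products. Let q₁ : A → X and q₂ : B → Y be regular epimorphisms and let f : X → Z and g : Y → Z be morphisms. Then f commutes with g if and only if f ∘ q₁ commutes with g ∘ q₂. -/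
open CategoryTheory CategoryTheory.Limits

universe v u

/-!
Precomposing a cooperator of `f` and `g` with `q₁ × q₂` gives one for `q₁ ≫ f` and `q₂ ≫ g`.
Conversely, let `σ` cooperate `q₁ ≫ f` and `q₂ ≫ g`, and let `q₁ × q₂` be the coequalizer of
`u, v`. Since `σ` restricts to `q₁ ≫ f` and `q₂ ≫ g` on the two axes, which already agree on the
components of `u` and `v`, two applications of centrality (one per coordinate) give
`u ≫ σ = v ≫ σ`. So `σ` factors through `q₁ × q₂`, and the factorization is a cooperator of `f`
and `g` because `q₁` and `q₂` are epimorphisms.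
-/

variable {C : Type u} [Category.{v} C]

theorem IsRegularEpimorphism.epi {X Q : C} {q : X ⟶ Q} (hq : IsRegularEpimorphism q) :
    Epi q := by
  obtain ⟨W, u, v, huv, hcoeq⟩ := hq
  refine ⟨fun a b h => ?_⟩
  obtain ⟨t, -, ht⟩ := hcoeq (q ≫ a) (by rw [← Category.assoc, ← Category.assoc, huv])
  exact (ht a rfl).trans (ht b h.symm).symm

section Cooperators

variable [HasZeroObject C] [HasZeroMorphisms C] [HasBinaryProducts C]

theorem Centralic.lift_comp_eq_of_zero_lift (hC : Centralic C) {X Y Z S : C}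
    (f : X ⨯ Y ⟶ Z) (x : S ⟶ X) (y y' : S ⟶ Y)
    (h : prod.lift 0 y ≫ f = prod.lift 0 y' ≫ f) :
    prod.lift x y ≫ f = prod.lift x y' ≫ f := by
  have swap : ∀ (a : S ⟶ X) (b : S ⟶ Y),
      prod.lift b a ≫ (prod.braiding Y X).hom ≫ f = prod.lift a b ≫ f := by
    intro a b
    rw [← Category.assoc]
    congr 1
    ext <;> simp only [Category.assoc, prod.braiding_hom, prod.lift_fst, prod.lift_snd]
  simpa only [swap] using hC ((prod.braiding Y X).hom ≫ f) y y' x (by simpa only [swap] using h)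

theorem Centralic.lift_comp_eq_s11 (hC : Centralic C) {X Y Z S : C} (f : X ⨯ Y ⟶ Z)
    {x x' : S ⟶ X} {y y' : S ⟶ Y} (hx : prod.lift x 0 ≫ f = prod.lift x' 0 ≫ f)
    (hy : prod.lift 0 y ≫ f = prod.lift 0 y' ≫ f) :
    prod.lift x y ≫ f = prod.lift x' y' ≫ f :=
  (hC f x x' y hx).trans (hC.lift_comp_eq_of_zero_lift f x' y y' hy)

variable {A B X : C} {f : A ⟶ X} {g : B ⟶ X} {ρ : A ⨯ B ⟶ X}

theorem IsCooperator.lift_zero_comp_s11 (hρ : IsCooperator f g ρ) {S : C} (a : S ⟶ A) :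
    prod.lift a (0 : S ⟶ B) ≫ ρ = a ≫ f := by
  rw [← hρ.1, ← Category.assoc, prod.comp_lift, Category.comp_id, comp_zero]

theorem IsCooperator.zero_lift_comp_s11 (hρ : IsCooperator f g ρ) {S : C} (b : S ⟶ B) :
    prod.lift (0 : S ⟶ A) b ≫ ρ = b ≫ g := by
  rw [← hρ.2, ← Category.assoc, prod.comp_lift, Category.comp_id, comp_zero]

theorem IsCooperator.lift_comp_eq_s11 (hC : Centralic C) (hρ : IsCooperator f g ρ) {S : C}
    {a a' : S ⟶ A} {b b' : S ⟶ B} (ha : a ≫ f = a' ≫ f) (hb : b ≫ g = b' ≫ g) :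
    prod.lift a b ≫ ρ = prod.lift a' b' ≫ ρ :=
  hC.lift_comp_eq_s11 ρ (by rw [hρ.lift_zero_comp_s11, hρ.lift_zero_comp_s11, ha])
    (by rw [hρ.zero_lift_comp_s11, hρ.zero_lift_comp_s11, hb])

theorem IsCooperator.map_comp (hρ : IsCooperator f g ρ) {A' B' : C} (a : A' ⟶ A) (b : B' ⟶ B) :
    IsCooperator (a ≫ f) (b ≫ g) (prod.map a b ≫ ρ) := by
  constructor
  · rw [← Category.assoc, prod.lift_map, Category.id_comp, zero_comp, hρ.lift_zero_comp_s11]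
  · rw [← Category.assoc, prod.lift_map, Category.id_comp, zero_comp, hρ.zero_lift_comp_s11]

theorem IsCooperator.of_map_comp {A' B' : C} {a : A' ⟶ A} {b : B' ⟶ B} [Epi a] [Epi b]
    (hρ : IsCooperator (a ≫ f) (b ≫ g) (prod.map a b ≫ ρ)) : IsCooperator f g ρ := by
  constructor
  · rw [← cancel_epi a, ← Category.assoc, prod.comp_lift, Category.comp_id, comp_zero]
    simpa using hρ.1
  · rw [← cancel_epi b, ← Category.assoc, prod.comp_lift, Category.comp_id, comp_zero]
    simpa using hρ.2

theorem Commutes.comp (h : Commutes f g) {A' B' : C} (a : A' ⟶ A) (b : B' ⟶ B) :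
    Commutes (a ≫ f) (b ≫ g) :=
  let ⟨ρ, hρ⟩ := h
  ⟨prod.map a b ≫ ρ, hρ.map_comp a b⟩

theorem IsCooperator.comp_eq_of_comp_map_eq (hC : Centralic C) {A' B' W : C}
    {q₁ : A' ⟶ A} {q₂ : B' ⟶ B} {σ : A' ⨯ B' ⟶ X} (hσ : IsCooperator (q₁ ≫ f) (q₂ ≫ g) σ)
    {u v : W ⟶ A' ⨯ B'} (huv : u ≫ prod.map q₁ q₂ = v ≫ prod.map q₁ q₂) :
    u ≫ σ = v ≫ σ := by
  have hfst : (u ≫ prod.fst) ≫ q₁ ≫ f = (v ≫ prod.fst) ≫ q₁ ≫ f := by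
    simpa using congrArg (· ≫ prod.fst ≫ f) huv
  have hsnd : (u ≫ prod.snd) ≫ q₂ ≫ g = (v ≫ prod.snd) ≫ q₂ ≫ g := by
    simpa using congrArg (· ≫ prod.snd ≫ g) huv
  have eta : ∀ w : W ⟶ A' ⨯ B', prod.lift (w ≫ prod.fst) (w ≫ prod.snd) = w := fun w => by
    rw [← prod.comp_lift, prod.lift_fst_snd, Category.comp_id]
  simpa only [eta] using hσ.lift_comp_eq_s11 hC hfst hsnd

theorem Commutes.of_comp (hC : Centralic C) (hstab : RegularEpisStableUnderProducts C)
    {A' B' : C} {q₁ : A' ⟶ A} {q₂ : B' ⟶ B} (hq₁ : IsRegularEpimorphism q₁)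
    (hq₂ : IsRegularEpimorphism q₂) (h : Commutes (q₁ ≫ f) (q₂ ≫ g)) : Commutes f g := by
  obtain ⟨σ, hσ⟩ := h
  obtain ⟨W, u, v, huv, hcoeq⟩ := hstab q₁ q₂ hq₁ hq₂
  obtain ⟨ρ, hρ, -⟩ := hcoeq σ (hσ.comp_eq_of_comp_map_eq hC huv)
  have := hq₁.epi
  have := hq₂.epi
  exact ⟨ρ, IsCooperator.of_map_comp (hρ ▸ hσ)⟩

end Cooperators

theorem stmt11 (C : Type u) [Category.{v} C] [HasZeroObject C] [HasZeroMorphisms C]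
    [HasFiniteLimits C] (hC : Centralic C)
    (hstab : RegularEpisStableUnderProducts C)
    {A B X Y Z : C} (q₁ : A ⟶ X) (q₂ : B ⟶ Y)
    (hq₁ : IsRegularEpimorphism q₁) (hq₂ : IsRegularEpimorphism q₂)
    (f : X ⟶ Z) (g : Y ⟶ Z) :
    Commutes f g ↔ Commutes (q₁ ≫ f) (q₂ ≫ g) :=
  ⟨fun h => h.comp q₁ q₂, Commutes.of_comp hC hstab hq₁ hq₂⟩
end

section
/- Let C be a centralic category. Every internal unitary magma structure ρ_X : X × X → X on an object X of C is commutative and associative: ρ_X ∘ ⟨π₂, π₁⟩ = ρ_X (where π₁, π₂ : X × X → X are the projections), and ρ_X ∘ (ρ_X × 1_X) = ρ_X ∘ (1_X × ρ_X) ∘ α where α : (X × X) × X ≅ X × (X × X) is the canonical associativity isomorphism. Hence every commutative object of C is the underlying object of a (necessarily unique) internal commutative monoid. -/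
open CategoryTheory CategoryTheory.Limits

universe v u

/-!
Write `x * y` for `⟨x, y⟩ ≫ ρ` on generalized elements `x y : S ⟶ X`. Applied to
`((a, c), b) ↦ (a * b) * c`, centralicity says that `(a * b) * c` depends on `(a, c)` only
through `a * c`. Comparing `(x, 0)` with `(0, x)` gives `x * y = y * x` (for any two unitary
magma structures, hence also uniqueness), and comparing `(x, z)` with `(0, x * z)` gives
`(x * y) * z = y * (x * z)`, which together with commutativity is associativity.
-/

namespace CategoryTheory.Limits

variable {C : Type u} [Category.{v} C] [HasZeroMorphisms C] [HasBinaryProducts C]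

lemma prod.lift_zero_right_comp_eq {X Y Z S : C} {ρ : X ⨯ Y ⟶ Z} {f : X ⟶ Z}
    (hρ : prod.lift (𝟙 X) 0 ≫ ρ = f) (u : S ⟶ X) : prod.lift u 0 ≫ ρ = u ≫ f := by
  rw [← hρ, ← Category.assoc, prod.comp_lift, Category.comp_id, comp_zero]

lemma prod.lift_zero_left_comp_eq {X Y Z S : C} {ρ : X ⨯ Y ⟶ Z}
    {g : Y ⟶ Z} (hρ : prod.lift 0 (𝟙 Y) ≫ ρ = g) (u : S ⟶ Y) :
    prod.lift 0 u ≫ ρ = u ≫ g := by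
  rw [← hρ, ← Category.assoc, prod.comp_lift, Category.comp_id, comp_zero]

end CategoryTheory.Limits

namespace Centralic

variable {C : Type u} [Category.{v} C] [HasZeroObject C] [HasZeroMorphisms C]
  [HasBinaryProducts C]

lemma lift_lift_comp_congr (hC : Centralic C) {X Y W Z S : C} {ρ₁ : X ⨯ Y ⟶ X}
    (hρ₁ : prod.lift (𝟙 X) 0 ≫ ρ₁ = 𝟙 X) (ρ₂ : X ⨯ W ⟶ Z) {a a' : S ⟶ X} {c c' : S ⟶ W}
    (h : prod.lift a c ≫ ρ₂ = prod.lift a' c' ≫ ρ₂) (b : S ⟶ Y) :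
    prod.lift (prod.lift a b ≫ ρ₁) c ≫ ρ₂ = prod.lift (prod.lift a' b ≫ ρ₁) c' ≫ ρ₂ := by
  let f : (X ⨯ W) ⨯ Y ⟶ Z :=
    prod.lift (prod.lift (prod.fst ≫ prod.fst) prod.snd ≫ ρ₁) (prod.fst ≫ prod.snd) ≫ ρ₂
  have hf (a : S ⟶ X) (c : S ⟶ W) (b : S ⟶ Y) :
      prod.lift (prod.lift a c) b ≫ f = prod.lift (prod.lift a b ≫ ρ₁) c ≫ ρ₂ := by
    rw [prod.comp_lift_assoc, ← Category.assoc, prod.comp_lift, prod.lift_fst_assoc,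
      prod.lift_fst, prod.lift_snd, prod.lift_fst_assoc, prod.lift_snd]
  have h₀ : prod.lift (prod.lift a c) 0 ≫ f = prod.lift (prod.lift a' c') 0 ≫ f := by
    simpa only [hf, prod.lift_zero_right_comp_eq hρ₁, Category.comp_id] using h
  simpa only [hf] using hC f _ _ b h₀

lemma lift_comp_eq_lift_swap_comp (hC : Centralic C) {X S : C} {ρ₁ ρ₂ : X ⨯ X ⟶ X}
    (hρ₁ : IsCooperator (𝟙 X) (𝟙 X) ρ₁) (hρ₂ : IsCooperator (𝟙 X) (𝟙 X) ρ₂) (x y : S ⟶ X) :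
    prod.lift x y ≫ ρ₁ = prod.lift y x ≫ ρ₂ := by
  have hx : prod.lift x 0 ≫ ρ₂ = prod.lift 0 x ≫ ρ₂ := by
    rw [prod.lift_zero_right_comp_eq hρ₂.1, prod.lift_zero_left_comp_eq hρ₂.2]
  simpa only [prod.lift_zero_right_comp_eq hρ₂.1, prod.lift_zero_left_comp_eq hρ₁.2,
    Category.comp_id]
    using hC.lift_lift_comp_congr hρ₁.1 ρ₂ hx y

lemma lift_lift_comp_comp_eq_lift_lift_comp (hC : Centralic C) {X S : C}
    {ρ : X ⨯ X ⟶ X} (hρ : IsCooperator (𝟙 X) (𝟙 X) ρ) (x y z : S ⟶ X) :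
    prod.lift (prod.lift x y ≫ ρ) z ≫ ρ = prod.lift y (prod.lift x z ≫ ρ) ≫ ρ := by
  have hxz : prod.lift x z ≫ ρ = prod.lift 0 (prod.lift x z ≫ ρ) ≫ ρ := by
    rw [prod.lift_zero_left_comp_eq hρ.2, Category.comp_id]
  simpa only [prod.lift_zero_left_comp_eq hρ.2, Category.comp_id]
    using hC.lift_lift_comp_congr hρ.1 ρ hxz y

lemma lift_lift_comp_comp_assoc (hC : Centralic C) {X S : C} {ρ : X ⨯ X ⟶ X}
    (hρ : IsCooperator (𝟙 X) (𝟙 X) ρ) (x y z : S ⟶ X) :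
    prod.lift (prod.lift x y ≫ ρ) z ≫ ρ = prod.lift x (prod.lift y z ≫ ρ) ≫ ρ := by
  rw [hC.lift_comp_eq_lift_swap_comp hρ hρ x y, hC.lift_lift_comp_comp_eq_lift_lift_comp hρ]

end Centralic

/-- Every internal unitary magma structure in a centralic category is commutative,
associative, and unique; hence every commutative object underlies a (necessarily
unique) internal commutative monoid. -/
theorem stmt17 (C : Type u) [Category.{v} C] [HasZeroObject C] [HasZeroMorphisms C]
    [HasBinaryProducts C] (hC : Centralic C)
    {X : C} (ρX : X ⨯ X ⟶ X)
    (h₁ : prod.lift (𝟙 X) 0 ≫ ρX = 𝟙 X) (h₂ : prod.lift 0 (𝟙 X) ≫ ρX = 𝟙 X) :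
    -- commutativity
    (prod.lift prod.snd prod.fst ≫ ρX = ρX) ∧
    -- associativity
    (prod.map ρX (𝟙 X) ≫ ρX =
      (prod.associator X X X).hom ≫ prod.map (𝟙 X) ρX ≫ ρX) ∧
    -- uniqueness of the structure
    (∀ ρ' : X ⨯ X ⟶ X,
      prod.lift (𝟙 X) 0 ≫ ρ' = 𝟙 X → prod.lift 0 (𝟙 X) ≫ ρ' = 𝟙 X → ρ' = ρX) := by
  have hρX : IsCooperator (𝟙 X) (𝟙 X) ρX := ⟨h₁, h₂⟩
  have comm : prod.lift prod.snd prod.fst ≫ ρX = ρX := by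
    simpa using (hC.lift_comp_eq_lift_swap_comp hρX hρX prod.fst prod.snd).symm
  refine ⟨comm, ?_, fun ρ' h₁' h₂' => ?_⟩
  · have assoc := hC.lift_lift_comp_comp_assoc hρX (prod.fst ≫ prod.fst) (prod.fst ≫ prod.snd)
      (prod.snd : (X ⨯ X) ⨯ X ⟶ X)
    have hl : prod.map ρX (𝟙 X) =
        prod.lift (prod.lift (prod.fst ≫ prod.fst) (prod.fst ≫ prod.snd) ≫ ρX) prod.snd := by
      rw [← prod.comp_lift, prod.lift_fst_snd, Category.comp_id, ← Category.comp_id prod.snd,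
        prod.lift_fst_comp_snd_comp]
    have hr : (prod.associator X X X).hom ≫ prod.map (𝟙 X) ρX =
        prod.lift (prod.fst ≫ prod.fst) (prod.lift (prod.fst ≫ prod.snd) prod.snd ≫ ρX) := by
      ext <;> simp [prod.lift_fst, prod.lift_snd]
    rw [hl, ← Category.assoc, hr]
    exact assoc
  · rw [← comm]
    simpa using hC.lift_comp_eq_lift_swap_comp ⟨h₁', h₂'⟩ hρX prod.fst prod.snd
end

section
/- Let C be a centralic category and let X be a commutative object with unitary magma structure ρ_X : X × X → X. Then the diagram consisting of the two morphisms ⟨1_X,0⟩, ⟨0,1_X⟩ : X ⇉ X × X followed by ρ_X : X × X → X is a coequalizer diagram in C. -/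
open CategoryTheory CategoryTheory.Limits

universe v u

/-- For a commutative object `X`, its unitary magma structure `ρ_X` is the
coequalizer of the two product inclusions `X ⇉ X ⨯ X`. -/
theorem stmt18 (C : Type u) [Category.{v} C] [HasZeroObject C] [HasZeroMorphisms C]
    [HasBinaryProducts C] (hC : Centralic C)
    {X : C} (ρX : X ⨯ X ⟶ X)
    (h₁ : prod.lift (𝟙 X) 0 ≫ ρX = 𝟙 X) (h₂ : prod.lift 0 (𝟙 X) ≫ ρX = 𝟙 X) :
    IsCoequalizerDiagram (prod.lift (𝟙 X) 0) (prod.lift 0 (𝟙 X)) ρX := by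
  constructor
  · rw [h₁, h₂]
  · intro Z h hcoeq
    have lift00 : prod.lift (0 : X ⨯ X ⟶ X) (0 : X ⨯ X ⟶ X) ≫ ρX = 0 := by
      have e : prod.lift (0 : X ⨯ X ⟶ X) (0 : X ⨯ X ⟶ X) =
          (0 : X ⨯ X ⟶ X) ≫ prod.lift (𝟙 X) 0 := by
        rw [prod.comp_lift, zero_comp, comp_zero]
      rw [e, Category.assoc, h₁]
      simp
    have swap : prod.lift (prod.fst : X ⨯ X ⟶ X) 0 ≫ h =
        prod.lift 0 (prod.fst : X ⨯ X ⟶ X) ≫ h := by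
      have e1 : prod.lift (prod.fst : X ⨯ X ⟶ X) 0 =
          (prod.fst : X ⨯ X ⟶ X) ≫ prod.lift (𝟙 X) (0 : X ⟶ X) := by
        simp
      have e2 : prod.lift (0 : X ⨯ X ⟶ X) (prod.fst : X ⨯ X ⟶ X) =
          (prod.fst : X ⨯ X ⟶ X) ≫ prod.lift (0 : X ⟶ X) (𝟙 X) := by
        simp
      rw [e1, e2, Category.assoc, Category.assoc, hcoeq]
    -- auxiliary morphism f(⟨p,q⟩,c) = h(p, ρ(q,c))
    set f : (X ⨯ X) ⨯ X ⟶ Z :=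
      prod.lift (prod.fst ≫ prod.fst)
        (prod.lift (prod.fst ≫ prod.snd) prod.snd ≫ ρX) ≫ h with hf
    have prem : prod.lift (prod.lift prod.fst (0 : X ⨯ X ⟶ X)) 0 ≫ f =
        prod.lift (prod.lift (0 : X ⨯ X ⟶ X) prod.fst) 0 ≫ f := by
      rw [hf, ← Category.assoc, ← Category.assoc, prod.comp_lift, prod.comp_lift]
      simp only [prod.comp_lift_assoc, prod.comp_lift, prod.lift_fst, prod.lift_snd, Category.assoc,
        comp_zero, zero_comp, prod.lift_fst_assoc, prod.lift_snd_assoc]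
      rw [lift00]
      have e3 : prod.lift (prod.fst : X ⨯ X ⟶ X) 0 ≫ ρX = prod.fst := by
        have e1 : prod.lift (prod.fst : X ⨯ X ⟶ X) 0 =
            (prod.fst : X ⨯ X ⟶ X) ≫ prod.lift (𝟙 X) (0 : X ⟶ X) := by
          simp
        rw [e1, Category.assoc, h₁, Category.comp_id]
      rw [e3, swap]
    have conc := hC f (prod.lift prod.fst 0) (prod.lift 0 prod.fst) prod.snd prem
    have key : ρX ≫ (prod.lift 0 (𝟙 X) ≫ h) = h := by
      rw [hf, ← Category.assoc, ← Category.assoc, prod.comp_lift, prod.comp_lift] at conc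
      simp only [prod.comp_lift_assoc, prod.comp_lift, prod.lift_fst, prod.lift_snd, Category.assoc,
        comp_zero, zero_comp, prod.lift_fst_assoc, prod.lift_snd_assoc] at conc
      have e4 : prod.lift (0 : X ⨯ X ⟶ X) prod.snd ≫ ρX = prod.snd := by
        have e1 : prod.lift (0 : X ⨯ X ⟶ X) (prod.snd : X ⨯ X ⟶ X) =
            prod.snd ≫ prod.lift 0 (𝟙 X) := by
          simp
        rw [e1, Category.assoc, h₂, Category.comp_id]
      have e5 : prod.lift (prod.fst : X ⨯ X ⟶ X) prod.snd ≫ ρX = ρX := by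
        rw [prod.lift_fst_snd, Category.id_comp]
      rw [e4, e5, prod.lift_fst_snd, Category.id_comp] at conc
      have e6 : prod.lift (0 : X ⨯ X ⟶ X) ρX = ρX ≫ prod.lift 0 (𝟙 X) := by
        simp
      rw [e6, Category.assoc] at conc
      exact conc.symm
    refine ⟨prod.lift 0 (𝟙 X) ≫ h, key, fun t ht => ?_⟩
    rw [← ht, ← Category.assoc, h₂, Category.id_comp]
end

section
/- Let C be a pointed category with binary products. (a) If C has coequalizers and satisfies condition (T), then C satisfies condition (§). (b) If C has a (regular epimorphism, monomorphism)-factorization system and satisfies condition (§), then C satisfies condition (T). Condition (§): for every object X and every commutative diagram where φ : X × X → Y satisfies φ ∘ ⟨1_X,0⟩ = m ∘ f' and φ ∘ ⟨0,1_X⟩ = m ∘ f' for a monomorphism m : W → Y and a morphism f' : X → W (i.e., φ ∘ ⟨1_X,0⟩ = φ ∘ ⟨0,1_X⟩ factors through m), there exists ψ : X × X → W with m ∘ ψ = φ. Condition (T): for every object X and every morphism φ : X × X → Y with φ ∘ ⟨1_X,0⟩ = φ ∘ ⟨0,1_X⟩ =: f, if φ is a regular epimorphism then so is f. -/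
open CategoryTheory CategoryTheory.Limits

universe v u

/-- Condition (§): whenever `φ : X ⨯ X ⟶ Y` restricted along both product
inclusions equals a morphism factoring through a monomorphism `m`, the whole of
`φ` factors through `m`. -/
def CondSection (C : Type u) [Category.{v} C] [HasZeroObject C] [HasZeroMorphisms C]
    [HasBinaryProducts C] : Prop :=
  ∀ ⦃X Y W : C⦄ (φ : X ⨯ X ⟶ Y) (m : W ⟶ Y) (f' : X ⟶ W), Mono m →
    prod.lift (𝟙 X) 0 ≫ φ = f' ≫ m → prod.lift 0 (𝟙 X) ≫ φ = f' ≫ m →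
    ∃ ψ : X ⨯ X ⟶ W, ψ ≫ m = φ

/-- Condition (T): if `φ : X ⨯ X ⟶ Y` is a regular epimorphism whose restrictions
along the two product inclusions agree, then that restriction is a regular
epimorphism. -/
def CondT (C : Type u) [Category.{v} C] [HasZeroObject C] [HasZeroMorphisms C]
    [HasBinaryProducts C] : Prop :=
  ∀ ⦃X Y : C⦄ (φ : X ⨯ X ⟶ Y),
    prod.lift (𝟙 X) 0 ≫ φ = prod.lift 0 (𝟙 X) ≫ φ →
    IsRegularEpimorphism φ → IsRegularEpimorphism (prod.lift (𝟙 X) 0 ≫ φ)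

lemma coeq_epi {C : Type u} [Category.{v} C] {A X Q : C} {u v : A ⟶ X} {q : X ⟶ Q}
    (h : IsCoequalizerDiagram u v q) : ∀ ⦃Z : C⦄ (a b : Q ⟶ Z), q ≫ a = q ≫ b → a = b := by
  intro Z a b hab
  obtain ⟨hc, huniv⟩ := h
  have : u ≫ (q ≫ a) = v ≫ (q ≫ a) := by rw [← Category.assoc, ← Category.assoc, hc]
  obtain ⟨t, ht, hu⟩ := huniv (q ≫ a) this
  exact (hu a rfl).trans (hu b hab.symm).symm

theorem stmt19 (C : Type u) [Category.{v} C] [HasZeroObject C] [HasZeroMorphisms C]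
    [HasBinaryProducts C] :
    -- (a) with coequalisers, (T) implies (§)
    ((∀ ⦃A X : C⦄ (u v : A ⟶ X), ∃ (Q : C) (q : X ⟶ Q), IsCoequalizerDiagram u v q) →
      CondT C → CondSection C) ∧
    -- (b) with (regular epi, mono)-factorisations, (§) implies (T)
    ((∀ ⦃X Y : C⦄ (f : X ⟶ Y), ∃ (W : C) (e : X ⟶ W) (m : W ⟶ Y),
        IsRegularEpimorphism e ∧ Mono m ∧ e ≫ m = f) →
      CondSection C → CondT C) := by
  constructor
  · -- (a)
    intro hcoeq hT X Y W φ m f' hm h1 h2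
    obtain ⟨Q, q, hq⟩ := hcoeq (prod.lift (𝟙 X) 0) (prod.lift 0 (𝟙 X))
    have hqreg : IsRegularEpimorphism q := ⟨_, _, _, hq⟩
    have hfreg : IsRegularEpimorphism (prod.lift (𝟙 X) 0 ≫ q) := hT q hq.1 hqreg
    obtain ⟨A, u, v, hf⟩ := hfreg
    obtain ⟨t, ht, -⟩ := hq.2 φ (h1.trans h2.symm)
    have hft : (prod.lift (𝟙 X) 0 ≫ q) ≫ t = f' ≫ m := by
      rw [Category.assoc, ht, h1]
    have huv : u ≫ f' = v ≫ f' := by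
      apply (cancel_mono m).1
      have h3 := congrArg (fun k => k ≫ t) hf.1
      simp only [Category.assoc] at h3 ⊢
      rw [ht] at h3
      rw [← h1]
      exact h3
    obtain ⟨s, hs, -⟩ := hf.2 f' huv
    have hsm : s ≫ m = t := by
      apply coeq_epi hf
      rw [← Category.assoc, hs, ← hft, Category.assoc]
    exact ⟨q ≫ s, by rw [Category.assoc, hsm, ht]⟩
  · -- (b)
    intro hfact hS X Y φ hφ hreg
    obtain ⟨W, e, m, hereg, hm, hem⟩ := hfact (prod.lift (𝟙 X) 0 ≫ φ)
    obtain ⟨ψ, hψ⟩ := hS φ m e hm hem.symm (hφ ▸ hem.symm)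
    obtain ⟨A, u, v, hc⟩ := hreg
    have huvψ : u ≫ ψ = v ≫ ψ := by
      apply (cancel_mono m).1
      rw [Category.assoc, Category.assoc, hψ, hc.1]
    obtain ⟨t, ht, -⟩ := hc.2 ψ huvψ
    have htm : t ≫ m = 𝟙 Y := by
      apply coeq_epi hc
      rw [← Category.assoc, ht, hψ, Category.comp_id]
    have hmt : m ≫ t = 𝟙 W := by
      apply (cancel_mono m).1
      rw [Category.assoc, htm, Category.comp_id, Category.id_comp]
    obtain ⟨B, a, b, he⟩ := hereg
    refine ⟨B, a, b, ?_, ?_⟩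
    · rw [← hem, ← Category.assoc, ← Category.assoc, he.1]
    · intro Z h hab
      rw [← hem]
      obtain ⟨s, hsx, hsu⟩ := he.2 h hab
      refine ⟨t ≫ s, ?_, ?_⟩
      · show (e ≫ m) ≫ t ≫ s = h
        rw [Category.assoc, ← Category.assoc m, hmt, Category.id_comp, hsx]
      · intro r hr
        have hmr : m ≫ r = s :=
          hsu (m ≫ r) (by show e ≫ m ≫ r = h; rw [← Category.assoc]; exact hr)
        rw [← hmr, ← Category.assoc, htm, Category.id_comp]
end
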